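/- arXiv:2403.05120 — 2 statements merged into one kernel-verified Lean document; each statement's English description precedes it below -/
import Mathlib

section
/- If u and v are false twins in a graph G and S is a mutual-visibility set of G with S ∩ {u,v} = {u}, then (S \ {u}) ∪ {v} is also a mutual-visibility set of G. -/
open SimpleGraph

variable {V : Type*}

/-- A walk is a shortest path if it is a path and its length equals the distance
between its endpoints. -/
def SimpleGraph.IsShortestPath (G : SimpleGraph V) {u v : V} (p : G.Walk u v) : Prop :=
  p.IsPath ∧ p.length = G.dist u v

/-- `S` is a general position set: no three vertices of `S` lie on a common shortest path. -/
def SimpleGraph.IsGPSet (G : SimpleGraph V) (S : Set V) : Prop :=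
  ∀ ⦃u v : V⦄ (p : G.Walk u v), G.IsShortestPath p →
    ∀ x ∈ S, ∀ y ∈ S, ∀ z ∈ S, x ≠ y → x ≠ z → y ≠ z →
      ¬ (x ∈ p.support ∧ y ∈ p.support ∧ z ∈ p.support)

/-- `u` and `v` are `S`-visible: some shortest `u,v`-path has no internal vertex in `S`. -/
def SimpleGraph.SVisible (G : SimpleGraph V) (S : Set V) (u v : V) : Prop :=
  ∃ p : G.Walk u v, G.IsShortestPath p ∧ ∀ w ∈ p.support, w ≠ u → w ≠ v → w ∉ S

/-- `S` is a mutual-visibility set. -/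
def SimpleGraph.IsMVSet (G : SimpleGraph V) (S : Set V) : Prop :=
  ∀ u ∈ S, ∀ v ∈ S, u ≠ v → G.SVisible S u v

/-- `S` is a total mutual-visibility set. -/
def SimpleGraph.IsTotalMVSet (G : SimpleGraph V) (S : Set V) : Prop :=
  ∀ u v : V, u ≠ v → G.SVisible S u v

/-- `S` is an outer mutual-visibility set. -/
def SimpleGraph.IsOuterMVSet (G : SimpleGraph V) (S : Set V) : Prop :=
  G.IsMVSet S ∧ ∀ u ∈ S, ∀ v ∉ S, u ≠ v → G.SVisible S u v

/-- The mutual-visibility number `μ(G)`. -/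
noncomputable def SimpleGraph.mutualVisibilityNumber (G : SimpleGraph V) [Fintype V] : ℕ :=
  sSup {k | ∃ S : Finset V, G.IsMVSet ↑S ∧ S.card = k}

/-- The total mutual-visibility number `μ_t(G)`. -/
noncomputable def SimpleGraph.totalMutualVisibilityNumber (G : SimpleGraph V) [Fintype V] : ℕ :=
  sSup {k | ∃ S : Finset V, G.IsTotalMVSet ↑S ∧ S.card = k}

/-- The outer mutual-visibility number `μ_o(G)`. -/
noncomputable def SimpleGraph.outerMutualVisibilityNumber (G : SimpleGraph V) [Fintype V] : ℕ :=
  sSup {k | ∃ S : Finset V, G.IsOuterMVSet ↑S ∧ S.card = k}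

/-- The general position number `gp(G)`. -/
noncomputable def SimpleGraph.gpNumber (G : SimpleGraph V) [Fintype V] : ℕ :=
  sSup {k | ∃ S : Finset V, G.IsGPSet ↑S ∧ S.card = k}

/-- The double graph `D(G)`: two copies of each vertex, `(u, b)` adjacent to `(v, c)`
iff `u` adjacent to `v` in `G`. -/
def SimpleGraph.doubleGraph (G : SimpleGraph V) : SimpleGraph (V × Bool) where
  Adj x y := G.Adj x.1 y.1
  symm := ⟨by intro _ _ h; exact G.adj_symm h⟩
  loopless := ⟨by intro x h; exact G.irrefl h⟩

/-- The Mycielskian `M(G)`: `some (u, false)` are the original vertices, `some (u, true)`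
their copies, and `none` is the apex vertex `v*`. -/
def SimpleGraph.mycielskian (G : SimpleGraph V) : SimpleGraph (Option (V × Bool)) where
  Adj x y := match x, y with
    | some (u, false), some (v, false) => G.Adj u v
    | some (u, false), some (v, true) => G.Adj u v
    | some (u, true), some (v, false) => G.Adj u v
    | some (_, true), none => True
    | none, some (_, true) => True
    | _, _ => False
  symm := by
    constructor
    rintro (_ | ⟨u, (_|_)⟩) (_ | ⟨v, (_|_)⟩) h <;>
      first
        | exact h
        | exact G.adj_symm h
  loopless := by
    constructor
    rintro (_ | ⟨u, (_|_)⟩) h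
    · exact h
    · exact G.irrefl h
    · exact h


/-! Transposing two false twins is an automorphism of `G`. Isomorphisms preserve distances, hence
shortest paths, hence visibility, so they carry mutual-visibility sets to mutual-visibility sets;
and the transposition carries `S` onto `(S \ {u}) ∪ {v}`. -/

namespace SimpleGraph

variable {W : Type*} {G : SimpleGraph V} {G' : SimpleGraph W}

theorem Hom.edist_le (f : G →g G') (u v : V) : G'.edist (f u) (f v) ≤ G.edist u v :=
  le_iInf fun p => (SimpleGraph.edist_le (p.map f)).trans_eq (by rw [Walk.length_map])

theorem Iso.edist_eq (e : G ≃g G') (u v : V) : G'.edist (e u) (e v) = G.edist u v := by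
  refine le_antisymm (e.toHom.edist_le u v) ?_
  simpa using e.symm.toHom.edist_le (e u) (e v)

theorem Iso.dist_eq (e : G ≃g G') (u v : V) : G'.dist (e u) (e v) = G.dist u v :=
  congrArg ENat.toNat (e.edist_eq u v)

theorem IsShortestPath.map_iso {u v : V} {p : G.Walk u v} (hp : G.IsShortestPath p)
    (e : G ≃g G') : G'.IsShortestPath (p.map e.toHom) :=
  ⟨hp.1.map e.injective, (p.length_map _).trans (hp.2.trans (e.dist_eq u v).symm)⟩

theorem SVisible.image_iso {S : Set V} {u v : V} (h : G.SVisible S u v) (e : G ≃g G') :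
    G'.SVisible (e '' S) (e u) (e v) := by
  obtain ⟨p, hp, hinternal⟩ := h
  refine ⟨p.map e.toHom, hp.map_iso e, ?_⟩
  rintro _ hw hwu hwv ⟨s, hs, rfl⟩
  rw [Walk.support_map, List.mem_map] at hw
  obtain ⟨w, hw, hws⟩ := hw
  obtain rfl : w = s := e.injective hws
  exact hinternal w hw (fun h => hwu (h ▸ rfl)) (fun h => hwv (h ▸ rfl)) hs

theorem IsMVSet.image_iso {S : Set V} (h : G.IsMVSet S) (e : G ≃g G') : G'.IsMVSet (e '' S) := by
  rintro _ ⟨u, hu, rfl⟩ _ ⟨v, hv, rfl⟩ huv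
  exact (h u hu v hv (ne_of_apply_ne e huv)).image_iso e

variable [DecidableEq V] {u v : V}

theorem adj_swap_of_neighborSet_eq (htwin : G.neighborSet u = G.neighborSet v) {x y : V}
    (h : G.Adj x y) : G.Adj (Equiv.swap u v x) (Equiv.swap u v y) := by
  have htwin' : ∀ w, G.Adj u w ↔ G.Adj v w := fun w => Set.ext_iff.mp htwin w
  rw [Equiv.swap_apply_def, Equiv.swap_apply_def]
  grind [G.adj_symm, G.loopless]

def Iso.swapOfNeighborSetEq (htwin : G.neighborSet u = G.neighborSet v) : G ≃g G where
  toEquiv := Equiv.swap u v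
  map_rel_iff' {x y} := by
    refine ⟨fun h => ?_, adj_swap_of_neighborSet_eq htwin⟩
    simpa using adj_swap_of_neighborSet_eq htwin h

end SimpleGraph

theorem Set.image_swap_of_inter_pair_eq_singleton [DecidableEq V] {S : Set V} {u v : V}
    (h : S ∩ {u, v} = {u}) : Equiv.swap u v '' S = S \ {u} ∪ {v} := by
  rw [Equiv.image_eq_preimage_symm, Equiv.symm_swap]
  have h' := Set.ext_iff.mp h
  simp only [Set.mem_inter_iff, Set.mem_insert_iff, Set.mem_singleton_iff] at h'
  ext w
  simp only [Set.mem_preimage, Set.mem_union, Set.mem_sdiff, Set.mem_singleton_iff,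
    Equiv.swap_apply_def]
  grind

theorem false_twins_mv_general (G : SimpleGraph V) (u v : V)
    (htwin : G.neighborSet u = G.neighborSet v) (S : Set V)
    (hS : G.IsMVSet S) (hSuv : S ∩ {u, v} = {u}) :
    G.IsMVSet ((S \ {u}) ∪ {v}) := by
  classical
  rw [← Set.image_swap_of_inter_pair_eq_singleton hSuv]
  exact hS.image_iso (Iso.swapOfNeighborSetEq htwin)

theorem false_twins_mv (G : SimpleGraph V) (hconn : G.Connected) (u v : V)
    (htwin : G.neighborSet u = G.neighborSet v) (S : Set V)
    (hS : G.IsMVSet S) (hSuv : S ∩ {u, v} = {u}) :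
    G.IsMVSet ((S \ {u}) ∪ {v}) :=
  false_twins_mv_general G u v htwin S hS hSuv
end

section
/- For every n ≥ 7, the mutual-visibility number of the double graph of the cycle C_n equals n. -/
open SimpleGraph

variable {V : Type*}

/-!
The layer `V(C_n) × {false}` is a mutual-visibility set of `D(C_n)`: two of its vertices see each
other along a shortest path whose interior is lifted to the other layer. Conversely, let `S` be a
mutual-visibility set and call a column `{i} × Bool` full if it lies in `S`, occupied if it meets
`S`. Shortest paths of `D(C_n)` project to shortest paths of `C_n`, and for `2 d < n` the only
shortest path from `i` to `i + d` in `C_n` is the arc `i, i + 1, …, i + d`; so for `d ≤ 3` no full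
column lies strictly inside such an arc between two occupied columns. Hence
`k ↦ if k + 1 is occupied then k - 1 else k + 1` maps full columns injectively to empty columns,
which gives `|S| ≤ n`.
-/

open scoped Fin.NatCast Fin.CommRing

lemma Fin.natCast_inj_of_lt {n a b : ℕ} [NeZero n] (ha : a < n) (hb : b < n) :
    (a : Fin n) = b ↔ a = b := by
  simp [Fin.ext_iff, Fin.val_natCast, Nat.mod_eq_of_lt ha, Nat.mod_eq_of_lt hb]

lemma Finset.card_le_of_injOn_full_to_empty {α : Type*} [Fintype α] [DecidableEq α]
    (S : Finset (α × Bool)) (f : α → α)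
    (hf : ∀ k, (∀ b, (k, b) ∈ S) → ∀ b, (f k, b) ∉ S)
    (hinj : Set.InjOn f {k | ∀ b, (k, b) ∈ S}) : S.card ≤ Fintype.card α := by
  have full : ∀ {k}, (k, false) ∈ S → (k, true) ∈ S → ∀ b, (k, b) ∈ S := fun h₀ h₁ =>
    Bool.forall_bool.mpr ⟨h₀, h₁⟩
  let g : α × Bool → α := fun x => if x.2 = true ∧ (x.1, false) ∈ S then f x.1 else x.1
  refine (Finset.card_le_card_of_injOn g (fun _ _ => Finset.mem_coe.2 (Finset.mem_univ _))
    ?_).trans_eq Finset.card_univ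
  rintro ⟨i, b⟩ hi ⟨j, c⟩ hj hg
  simp only [Finset.mem_coe] at hi hj
  cases b <;> cases c <;> simp only [g, Bool.false_eq_true, false_and, true_and, if_false] at hg
  · rw [hg]
  · split_ifs at hg with hj₀
    · exact absurd (hg ▸ hi) (hf j (full hj₀ hj) false)
    · exact absurd (hg ▸ hi) hj₀
  · split_ifs at hg with hi₀
    · exact absurd (hg ▸ hj) (hf i (full hi₀ hi) false)
    · exact absurd (hg ▸ hj) hi₀
  · split_ifs at hg with hi₀ hj₀ hj₀
    · rw [hinj (full hi₀ hi) (full hj₀ hj) hg]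
    · exact absurd (hg ▸ hj) (hf i (full hi₀ hi) true)
    · exact absurd (hg ▸ hi) (hf j (full hj₀ hj) true)
    · rw [hg]

namespace SimpleGraph

variable {G : SimpleGraph V} {m : ℕ}

def doubleGraphFst (G : SimpleGraph V) : G.doubleGraph →g G := ⟨Prod.fst, id⟩

lemma Walk.exists_doubleGraph_lift {u v : V} (w : G.Walk u v) (hw : w.length ≠ 0) (b c : Bool) :
    ∃ p : G.doubleGraph.Walk (u, b) (v, c), p.length = w.length ∧
      ∀ x ∈ p.support, x = (u, b) ∨ x = (v, c) ∨ x.2 = true := by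
  induction w generalizing b with
  | nil => simp at hw
  | @cons u x v h w ih =>
    by_cases hw' : w.length = 0
    · obtain rfl := w.eq_of_length_eq_zero hw'
      refine ⟨.cons (show G.doubleGraph.Adj (u, b) (x, c) from h) .nil, by simp [hw'], ?_⟩
      simp
    · obtain ⟨p, hp, hsupp⟩ := ih hw' true
      refine ⟨.cons (show G.doubleGraph.Adj (u, b) (x, true) from h) p, by simp [hp], ?_⟩
      simp only [Walk.support_cons, List.mem_cons, forall_eq_or_imp, true_or, true_and]
      intro y hy
      rcases hsupp y hy with rfl | rfl | hy <;> simp_all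

lemma dist_doubleGraph {u v : V} (huv : u ≠ v) (b c : Bool) :
    G.doubleGraph.dist (u, b) (v, c) = G.dist u v := by
  by_cases hr : G.Reachable u v
  · obtain ⟨w, hw⟩ := hr.exists_walk_length_eq_dist
    obtain ⟨p, hp, -⟩ :=
      w.exists_doubleGraph_lift (fun h => huv (w.eq_of_length_eq_zero h)) b c
    obtain ⟨r, hr⟩ := Reachable.exists_walk_length_eq_dist ⟨p⟩
    refine le_antisymm ((dist_le p).trans_eq (hp.trans hw)) ?_
    rw [← hr, ← r.length_map G.doubleGraphFst]
    exact dist_le _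
  · rw [dist_eq_zero_of_not_reachable hr, dist_eq_zero_of_not_reachable]
    exact fun ⟨r⟩ => hr ⟨r.map G.doubleGraphFst⟩

lemma isMVSet_doubleGraph_range_false (hG : G.Preconnected) :
    G.doubleGraph.IsMVSet (Set.range fun v => (v, false)) := by
  rintro _ ⟨u, rfl⟩ _ ⟨v, rfl⟩ huv
  have huv' : u ≠ v := by rintro rfl; exact huv rfl
  obtain ⟨w, hw⟩ := (hG u v).exists_walk_length_eq_dist
  obtain ⟨p, hp, hsupp⟩ :=
    w.exists_doubleGraph_lift (fun h => huv' (w.eq_of_length_eq_zero h)) false false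
  have hlen : p.length = G.doubleGraph.dist (u, false) (v, false) := by
    rw [hp, hw, dist_doubleGraph huv']
  refine ⟨p, ⟨p.isPath_of_length_eq_dist hlen, hlen⟩, fun x hx hxu hxv ⟨y, hy⟩ => ?_⟩
  rcases hsupp x hx with h | h | h
  · exact hxu h
  · exact hxv h
  · simp [← hy] at h

lemma IsMVSet.not_forall_mem_of_forall_shortest {S : Set (V × Bool)}
    (hS : G.doubleGraph.IsMVSet S) {u v w : V} {b c : Bool} (hu : (u, b) ∈ S) (hv : (v, c) ∈ S)
    (huv : u ≠ v) (hw : ∀ p : G.Walk u v, p.length = G.dist u v → w ∈ p.support)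
    (hwu : w ≠ u) (hwv : w ≠ v) : ¬ ∀ d, (w, d) ∈ S := by
  obtain ⟨p, ⟨-, hp⟩, hvis⟩ := hS _ hu _ hv (by simp [huv])
  have hwp : w ∈ (p.map G.doubleGraphFst).support :=
    hw _ ((Walk.length_map _ _).trans (hp.trans (dist_doubleGraph huv b c)))
  rw [Walk.support_map, List.mem_map] at hwp
  obtain ⟨x, hx, rfl⟩ := hwp
  exact fun hfull => hvis x hx (by rintro rfl; exact hwu rfl) (by rintro rfl; exact hwv rfl)
    (hfull x.2)

-- `a` forward and `b` backward steps; a walk without backward steps runs straight along the cycle.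
lemma cycleGraph_exists_steps {i j : Fin (m + 2)} (p : (cycleGraph (m + 2)).Walk i j) :
    ∃ a b : ℕ, a + b = p.length ∧ j = i + a - b ∧
      (b = 0 → ∀ k ≤ p.length, p.getVert k = i + k) := by
  induction p with
  | nil => exact ⟨0, 0, rfl, by simp, fun _ k hk => by simp_all⟩
  | @cons u x v h p ih =>
    obtain ⟨a, b, hab, hv, hstraight⟩ := ih
    rcases cycleGraph_adj.mp h with h | h
    · refine ⟨a, b + 1, by simp [← hab, add_assoc], ?_, by simp⟩
      push_cast
      linear_combination hv - h
    · refine ⟨a + 1, b, by simp [← hab]; omega, by push_cast; linear_combination hv + h, ?_⟩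
      rintro hb (_ | k) hk
      · simp
      · rw [Walk.getVert_cons_succ, hstraight hb k (by simpa using hk)]
        push_cast
        linear_combination h

lemma cycleGraph_mem_support_of_length_le {i : Fin (m + 2)} {d : ℕ} (hd : 2 * d < m + 2)
    (p : (cycleGraph (m + 2)).Walk i (i + d)) (hp : p.length ≤ d) {k : ℕ} (hk : k ≤ d) :
    i + k ∈ p.support := by
  obtain ⟨a, b, hab, hj, hstraight⟩ := cycleGraph_exists_steps p
  have hcast : ((d + b : ℕ) : Fin (m + 2)) = a := by push_cast; linear_combination hj
  have hda : d + b = a := (Fin.natCast_inj_of_lt (by omega) (by omega)).mp hcast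
  have hb : b = 0 := by omega
  rw [← hstraight hb k (by omega)]
  exact p.getVert_mem_support k

lemma cycleGraph_dist_add_le (i : Fin (m + 2)) (d : ℕ) :
    (cycleGraph (m + 2)).dist i (i + d) ≤ d := by
  induction d with
  | zero => simp
  | succ d ih =>
    have hadj : (cycleGraph (m + 2)).Adj (i + d) (i + (d + 1 : ℕ)) := by
      rw [cycleGraph_adj]; right; push_cast; ring
    calc _ ≤ (cycleGraph (m + 2)).dist i (i + d)
            + (cycleGraph (m + 2)).dist (i + d) (i + (d + 1 : ℕ)) :=
          cycleGraph_connected.dist_triangle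
      _ ≤ d + 1 := by rw [dist_eq_one_iff_adj.mpr hadj]; omega

lemma IsMVSet.not_forall_mem_cycleGraph {S : Set (Fin (m + 2) × Bool)}
    (hS : (cycleGraph (m + 2)).doubleGraph.IsMVSet S) {i : Fin (m + 2)} {d k : ℕ} {b c : Bool}
    (hd : 2 * d < m + 2) (hi : (i, b) ∈ S) (hj : (i + d, c) ∈ S) (hk : 0 < k) (hkd : k < d) :
    ¬ ∀ e, (i + k, e) ∈ S := by
  have hne : ∀ {r s : ℕ}, r < s → s < m + 2 → i + r ≠ i + s := fun hrs hs h =>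
    hrs.ne ((Fin.natCast_inj_of_lt (by omega) hs).mp (add_left_cancel h))
  have hshortest : ∀ p : (cycleGraph (m + 2)).Walk i (i + d),
      p.length = (cycleGraph (m + 2)).dist i (i + d) → i + k ∈ p.support := fun p hp =>
    cycleGraph_mem_support_of_length_le hd p (hp.trans_le (cycleGraph_dist_add_le i d)) hkd.le
  refine hS.not_forall_mem_of_forall_shortest hi hj ?_ hshortest ?_ (hne hkd (by omega))
  · simpa using hne (r := 0) (s := d) (by omega) (by omega)
  · simpa using (hne (r := 0) (s := k) hk (by omega)).symm

lemma IsMVSet.card_le_of_cycleGraph (hm : 7 ≤ m + 2) {S : Finset (Fin (m + 2) × Bool)}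
    (hS : (cycleGraph (m + 2)).doubleGraph.IsMVSet S) : S.card ≤ m + 2 := by
  classical
  refine (S.card_le_of_injOn_full_to_empty
    (fun k => if ∃ b, (k + 1, b) ∈ S then k - 1 else k + 1) ?_ ?_).trans_eq (Fintype.card_fin _)
  · intro k hk
    split_ifs with h
    · obtain ⟨b, hb⟩ := h
      intro c hc
      have e₂ : k + 1 = k - 1 + ((2 : ℕ) : Fin (m + 2)) := by push_cast; ring
      have e₁ : k = k - 1 + ((1 : ℕ) : Fin (m + 2)) := by push_cast; ring
      exact hS.not_forall_mem_cycleGraph (by omega) hc (e₂ ▸ hb) one_pos one_lt_two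
        fun e => e₁ ▸ hk e
    · simpa using h
  · intro k hk k' hk' heq
    simp only at heq
    split_ifs at heq with h h' h'
    · linear_combination heq
    · obtain ⟨b, hb⟩ := h
      have e₃ : k + 1 = k' + ((3 : ℕ) : Fin (m + 2)) := by push_cast; linear_combination heq
      have e₂ : k = k' + ((2 : ℕ) : Fin (m + 2)) := by push_cast; linear_combination heq
      exact absurd (fun e => e₂ ▸ hk e) (hS.not_forall_mem_cycleGraph (by omega) (hk' false)
        (e₃ ▸ hb) two_pos (by norm_num))
    · obtain ⟨b, hb⟩ := h'
      have e₃ : k' + 1 = k + ((3 : ℕ) : Fin (m + 2)) := by push_cast; linear_combination -heq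
      have e₂ : k' = k + ((2 : ℕ) : Fin (m + 2)) := by push_cast; linear_combination -heq
      exact absurd (fun e => e₂ ▸ hk' e) (hS.not_forall_mem_cycleGraph (by omega) (hk false)
        (e₃ ▸ hb) two_pos (by norm_num))
    · linear_combination heq

lemma mutualVisibilityNumber_eq_of_card_eq_of_forall_le [Fintype V] {N : ℕ} {S : Finset V}
    (hS : G.IsMVSet S) (hcard : S.card = N)
    (hle : ∀ T : Finset V, G.IsMVSet T → T.card ≤ N) : G.mutualVisibilityNumber = N :=
  IsGreatest.csSup_eq ⟨⟨S, hS, hcard⟩, by rintro _ ⟨T, hT, rfl⟩; exact hle T hT⟩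

end SimpleGraph

theorem mu_double_cycle (n : ℕ) (hn : 7 ≤ n) :
    (SimpleGraph.cycleGraph n).doubleGraph.mutualVisibilityNumber = n := by
  obtain ⟨m, rfl⟩ : ∃ m, n = m + 2 := ⟨n - 2, by omega⟩
  have hlayer : (cycleGraph (m + 2)).doubleGraph.IsMVSet
      (Finset.univ.image fun v => (v, false) : Finset (Fin (m + 2) × Bool)) := by
    simpa using isMVSet_doubleGraph_range_false cycleGraph_preconnected
  exact mutualVisibilityNumber_eq_of_card_eq_of_forall_le hlayer
    ((Finset.card_image_of_injective _ fun _ _ h => (Prod.mk.inj h).1).trans (by simp))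
    fun T hT => hT.card_le_of_cycleGraph hn
end
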